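/- arXiv:1112.3060 — 2 statements merged into one kernel-verified Lean document; each statement's English description precedes it below -/
import Mathlib

section
/- Fix integers p > q ≥ 0. Let P and Q be orthogonal projections on ℝ^N of ranks p and q respectively. Then there exist orthogonal projections P' and Q' on ℝ^N of ranks p−1 and q+1 respectively such that P + Q = P' + Q'. -/
/-!
Since `rank P + dim ker Q = p + (N - q) > N`, some nonzero `v` satisfies `P v = v` and `Q v = 0`.
Moving the line `ℝ v` from `P` to `Q`, i.e. taking `P' = P - L` and `Q' = Q + L` for the
orthogonal projection `L` onto `ℝ v`, keeps both maps orthogonal projections; their ranks are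
read off from traces, since the rank of an idempotent matrix is its trace.
-/

open Matrix Module

theorem Submodule.inf_ne_bot_of_finrank_lt_add {K V : Type*} [Field K] [AddCommGroup V]
    [Module K V] [FiniteDimensional K V] (U W : Submodule K V)
    (h : finrank K V < finrank K U + finrank K W) : U ⊓ W ≠ ⊥ := by
  intro hbot
  have := Submodule.finrank_sup_add_finrank_inf_eq U W
  rw [hbot, finrank_bot] at this
  have := (U ⊔ W).finrank_le
  omega

namespace Matrix

theorem IsSymm.mul_eq_of_mul_eq {α n : Type*} [CommSemiring α] [Fintype n]
    {A B C : Matrix n n α} (hA : A.IsSymm) (hB : B.IsSymm) (hC : C.IsSymm) (h : A * B = C) :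
    B * A = C := by
  rw [← hA.eq, ← hB.eq, ← transpose_mul, h, hC.eq]

variable {K n : Type*} [Field K] [Fintype n]

section Rank

variable [DecidableEq n]

theorem isProj_range_toLin' {A : Matrix n n K} (hA : IsIdempotentElem A) :
    LinearMap.IsProj (LinearMap.range A.toLin') A.toLin' :=
  LinearMap.IsIdempotentElem.isProj_range _ (hA.map toLinAlgEquiv')

theorem trace_eq_rank_of_isIdempotentElem {A : Matrix n n K} (hA : IsIdempotentElem A) :
    A.trace = A.rank := by
  rw [← trace_toLin'_eq, (isProj_range_toLin' hA).trace, rank]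
  rfl

theorem rank_add_of_isIdempotentElem [CharZero K] {A B : Matrix n n K}
    (hA : IsIdempotentElem A) (hB : IsIdempotentElem B) (hAB : IsIdempotentElem (A + B)) :
    (A + B).rank = A.rank + B.rank := by
  have : ((A + B).rank : K) = A.rank + B.rank := by
    rw [← trace_eq_rank_of_isIdempotentElem hA, ← trace_eq_rank_of_isIdempotentElem hB,
      ← trace_eq_rank_of_isIdempotentElem hAB, trace_add]
  exact_mod_cast this

theorem exists_ne_zero_mulVec_eq_self_and_mulVec_eq_zero {P Q : Matrix n n K}
    (hP : IsIdempotentElem P) (h : Q.rank < P.rank) :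
    ∃ v ≠ 0, P *ᵥ v = v ∧ Q *ᵥ v = 0 := by
  have hdim : finrank K (n → K) < P.rank + finrank K (LinearMap.ker Q.mulVecLin) := by
    have := LinearMap.finrank_range_add_finrank_ker Q.mulVecLin
    rw [← rank] at this
    omega
  obtain ⟨v, ⟨hvP, hvQ⟩, hv0⟩ := Submodule.exists_mem_ne_zero_of_ne_bot
    (Submodule.inf_ne_bot_of_finrank_lt_add _ _ hdim)
  exact ⟨v, hv0, (isProj_range_toLin' hP).map_id v hvP, hvQ⟩

end Rank

/-- The orthogonal projection onto the line spanned by `v`; it is `0` when `v ⬝ᵥ v = 0`. -/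
def lineProj (v : n → K) : Matrix n n K := (v ⬝ᵥ v)⁻¹ • vecMulVec v v

theorem isSymm_lineProj (v : n → K) : (lineProj v).IsSymm := by
  simp [IsSymm, lineProj, transpose_vecMulVec]

theorem mul_lineProj (A : Matrix n n K) (v : n → K) :
    A * lineProj v = (v ⬝ᵥ v)⁻¹ • vecMulVec (A *ᵥ v) v := by
  rw [lineProj, Matrix.mul_smul, mul_vecMulVec]

theorem mul_lineProj_of_mulVec_eq_self {A : Matrix n n K} {v : n → K} (h : A *ᵥ v = v) :
    A * lineProj v = lineProj v := by
  rw [mul_lineProj, h, lineProj]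

theorem mul_lineProj_of_mulVec_eq_zero {A : Matrix n n K} {v : n → K} (h : A *ᵥ v = 0) :
    A * lineProj v = 0 := by
  simp [mul_lineProj, h]

theorem lineProj_mulVec_self {v : n → K} (hv : v ⬝ᵥ v ≠ 0) : lineProj v *ᵥ v = v := by
  simp [lineProj, smul_mulVec, vecMulVec_mulVec, smul_smul, inv_mul_cancel₀ hv]

theorem isIdempotentElem_lineProj {v : n → K} (hv : v ⬝ᵥ v ≠ 0) :
    IsIdempotentElem (lineProj v) :=
  mul_lineProj_of_mulVec_eq_self (lineProj_mulVec_self hv)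

theorem rank_lineProj [DecidableEq n] [CharZero K] {v : n → K} (hv : v ⬝ᵥ v ≠ 0) :
    (lineProj v).rank = 1 := by
  have := trace_eq_rank_of_isIdempotentElem (isIdempotentElem_lineProj hv)
  rw [lineProj, trace_smul, trace_vecMulVec, smul_eq_mul, inv_mul_cancel₀ hv] at this
  exact_mod_cast this.symm

end Matrix

/-- Given orthogonal projections `P, Q` on `ℝ^N` of ranks `p > q ≥ 0`, there exist
orthogonal projections `P', Q'` of ranks `p - 1` and `q + 1` with `P + Q = P' + Q'`. -/
theorem exists_projections_rank_shift (N : ℕ) (p q : ℕ) (hpq : p > q)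
    (P Q : Matrix (Fin N) (Fin N) ℝ)
    (hP2 : P * P = P) (hPsym : Pᵀ = P)
    (hQ2 : Q * Q = Q) (hQsym : Qᵀ = Q)
    (hPrank : P.rank = p) (hQrank : Q.rank = q) :
    ∃ P' Q' : Matrix (Fin N) (Fin N) ℝ,
      P' * P' = P' ∧ P'ᵀ = P' ∧
      Q' * Q' = Q' ∧ Q'ᵀ = Q' ∧
      P'.rank = p - 1 ∧ Q'.rank = q + 1 ∧
      P + Q = P' + Q' := by
  obtain ⟨v, hv0, hPv, hQv⟩ :=
    exists_ne_zero_mulVec_eq_self_and_mulVec_eq_zero hP2 (hPrank ▸ hQrank ▸ hpq)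
  have hv : v ⬝ᵥ v ≠ 0 := dotProduct_self_eq_zero.not.mpr hv0
  set L := lineProj v
  have hL : IsIdempotentElem L := isIdempotentElem_lineProj hv
  have hPL : P * L = L := mul_lineProj_of_mulVec_eq_self hPv
  have hQL : Q * L = 0 := mul_lineProj_of_mulVec_eq_zero hQv
  have hLP : L * P = L :=
    IsSymm.mul_eq_of_mul_eq hPsym (isSymm_lineProj v) (isSymm_lineProj v) hPL
  have hLQ : L * Q = 0 := IsSymm.mul_eq_of_mul_eq hQsym (isSymm_lineProj v) isSymm_zero hQL
  have hP' : IsIdempotentElem (P - L) := hL.sub hP2 hLP hPL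
  have hQ' : IsIdempotentElem (Q + L) := IsIdempotentElem.add hQ2 hL (by rw [hQL, hLQ, add_zero])
  have hrankP := rank_add_of_isIdempotentElem hP' hL (by rwa [sub_add_cancel])
  have hrankQ := rank_add_of_isIdempotentElem hQ2 hL hQ'
  rw [sub_add_cancel, rank_lineProj hv] at hrankP
  rw [rank_lineProj hv] at hrankQ
  exact ⟨P - L, Q + L, hP', IsSymm.sub hPsym (isSymm_lineProj v), hQ',
    IsSymm.add hQsym (isSymm_lineProj v), by omega, by omega, by abel⟩
end

section
/- If α > 1 is a real number such that αN ∈ ℕ, then TFF(α, N) = TFF(α̃, Ñ) as sets of sequences, where α̃ is determined by 1/α + 1/α̃ = 1 (that is, α̃ = α/(α−1)) and Ñ = N(α−1). -/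
/-!
Write each projection as `P i = U i * (U i)ᵀ` with `U i` having orthonormal columns. The
concatenation `A = [U 1 ⋯ U K]` satisfies `A Aᵀ = α • 1`, so `1 - α⁻¹ • Aᵀ A` is a projection of
rank `∑ L i - N = N'`. Writing it as `V Vᵀ`, the matrix `B = √α' • Vᵀ` satisfies
`B Bᵀ = α' • 1`, and the diagonal blocks of `Bᵀ B = α' • 1 - (α' - 1) • Aᵀ A` are
`α' - (α' - 1) = 1`; so the column blocks of `B` give a tight fusion frame in `ℝ^N'` with the same
ranks. Since `(α - 1) (α' - 1) = 1`, the construction is symmetric in `(α, N)` and `(α', N')`.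
-/

open Matrix

/-- `L` is a tight fusion frame (TFF) sequence for frame bound `α` in dimension `N`. -/
def IsTFF (N : ℕ) (α : ℝ) {K : ℕ} (L : Fin K → ℕ) : Prop :=
  ∃ P : Fin K → Matrix (Fin N) (Fin N) ℝ,
    (∀ i, P i * P i = P i) ∧
    (∀ i, (P i)ᵀ = P i) ∧
    (∀ i, (P i).rank = L i) ∧
    (∑ i, P i) = α • (1 : Matrix (Fin N) (Fin N) ℝ)

namespace Matrix

variable {n : Type*} [Fintype n] [DecidableEq n]

theorem IsSymm.exists_isometry_mul_transpose_eq_of_isIdempotentElem {P : Matrix n n ℝ}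
    (hPs : P.IsSymm) (hP : IsIdempotentElem P) :
    ∃ U : Matrix n (Fin P.rank) ℝ, Uᵀ * U = 1 ∧ U * Uᵀ = P := by
  have hH : P.IsHermitian := by
    rwa [IsHermitian, conjTranspose_eq_transpose_of_trivial]
  set Q : Matrix n n ℝ := (hH.eigenvectorUnitary : Matrix n n ℝ)
  set d := hH.eigenvalues
  have hQ : Qᵀ * Q = 1 := by
    simpa [star_eq_conjTranspose] using Unitary.coe_star_mul_self hH.eigenvectorUnitary
  have hPQ : P = Q * diagonal d * Qᵀ := by
    simpa [Unitary.conjStarAlgAut_apply, star_eq_conjTranspose] using hH.spectral_theorem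
  have hd : ∀ i, d i = 0 ∨ d i = 1 := fun i =>
    hP.spectrum_subset ℝ (hH.eigenvalues_mem_spectrum_real i)
  let e : Fin P.rank ≃ {i // d i ≠ 0} :=
    (Fintype.equivFinOfCardEq hH.rank_eq_card_non_zero_eigs.symm).symm
  have he : Function.Injective (Subtype.val ∘ e) := Subtype.val_injective.comp e.injective
  refine ⟨Q.submatrix id (Subtype.val ∘ e), ?_, ?_⟩
  · rw [transpose_submatrix, ← submatrix_mul _ _ _ _ _ Function.bijective_id, hQ,
      submatrix_one _ he]
  · ext a b
    calc ∑ j, Q a (e j) * Q b (e j) = ∑ i : {i // d i ≠ 0}, Q a i * Q b i :=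
          e.sum_comp fun i => Q a i * Q b i
      _ = ∑ i, Q a i * d i * Q b i := by
          rw [← Fintype.sum_subtype_add_sum_subtype (fun i => d i ≠ 0)]
          have h0 : ∀ i : {i // ¬d i ≠ 0}, Q a i * d i * Q b i = 0 := fun i => by
            simp [not_not.mp i.2]
          have h1 : ∀ i : {i // d i ≠ 0}, Q a i * d i * Q b i = Q a i * Q b i := fun i => by
            simp [(hd i).resolve_left i.2]
          simp only [h0, h1, Finset.sum_const_zero, add_zero]
      _ = P a b := by
          rw [hPQ]; simp [mul_apply, diagonal]

theorem IsSymm.trace_eq_rank_of_isIdempotentElem {P : Matrix n n ℝ} (hPs : P.IsSymm)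
    (hP : IsIdempotentElem P) : P.trace = P.rank := by
  obtain ⟨U, hU, hUP⟩ := hPs.exists_isometry_mul_transpose_eq_of_isIdempotentElem hP
  conv_lhs => rw [← hUP, trace_mul_comm, hU, trace_one, Fintype.card_fin]

section Blocks

variable {R m ι : Type*} {κ : ι → Type*} [NonUnitalNonAssocSemiring R] [Fintype ι]
  [∀ i, Fintype (κ i)]

theorem mul_transpose_eq_sum_submatrix_sigmaMk (A : Matrix m (Σ i, κ i) R) :
    A * Aᵀ = ∑ i, A.submatrix id (Sigma.mk i) * (A.submatrix id (Sigma.mk i))ᵀ := by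
  ext a b
  simp only [mul_apply, sum_apply, transpose_apply, submatrix_apply, id_eq]
  exact Fintype.sum_sigma _

omit [Fintype ι] [∀ i, Fintype (κ i)] in
theorem transpose_mul_self_submatrix_sigmaMk [Fintype m] (A : Matrix m (Σ i, κ i) R) (i : ι) :
    (Aᵀ * A).submatrix (Sigma.mk i) (Sigma.mk i) =
      (A.submatrix id (Sigma.mk i))ᵀ * A.submatrix id (Sigma.mk i) := by
  rw [submatrix_mul _ _ _ _ _ Function.bijective_id, transpose_submatrix]

end Blocks

/-- `1 - α⁻¹ • Aᵀ A` is the projection onto the orthogonal complement of the row space of `A`;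
the rows of `B` span that complement. -/
theorem exists_naimark_complement {ι : Type*} [Fintype ι] [DecidableEq ι] {α α' : ℝ}
    (hαα' : α.HolderConjugate α') {A : Matrix n ι ℝ} (hA : A * Aᵀ = α • 1) {r : ℕ}
    (hr : r + Fintype.card n = Fintype.card ι) :
    ∃ B : Matrix (Fin r) ι ℝ, B * Bᵀ = α' • 1 ∧ Bᵀ * B = α' • 1 - (α' - 1) • (Aᵀ * A) := by
  set G : Matrix ι ι ℝ := 1 - α⁻¹ • (Aᵀ * A)
  have hGs : G.IsSymm := by
    simp [G, IsSymm, transpose_sub, transpose_smul]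
  have hG : IsIdempotentElem G := by
    have hAA : (Aᵀ * A) * (Aᵀ * A) = α • (Aᵀ * A) := by
      rw [Matrix.mul_assoc, ← Matrix.mul_assoc A, hA, Matrix.smul_mul, Matrix.one_mul,
        Matrix.mul_smul]
    simp only [IsIdempotentElem, G, sub_mul, mul_sub, Matrix.one_mul,
      Matrix.smul_mul, Matrix.mul_smul, hAA, smul_smul, inv_mul_cancel₀ hαα'.ne_zero, mul_one]
    abel
  have hrank : G.rank = r := by
    have htrace : G.trace = Fintype.card ι - Fintype.card n := by
      rw [trace_sub, trace_smul, trace_mul_comm, hA, trace_smul, trace_one, trace_one,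
        smul_eq_mul, smul_eq_mul, inv_mul_cancel_left₀ hαα'.ne_zero]
    rw [← Nat.cast_inj (R := ℝ), ← hGs.trace_eq_rank_of_isIdempotentElem hG, htrace, ← hr]
    push_cast
    ring
  obtain ⟨V, hV, hVG⟩ := hrank ▸ hGs.exists_isometry_mul_transpose_eq_of_isIdempotentElem hG
  have hα' : √α' * √α' = α' := Real.mul_self_sqrt hαα'.symm.nonneg
  refine ⟨√α' • Vᵀ, ?_, ?_⟩
  · rw [transpose_smul, transpose_transpose, Matrix.smul_mul, Matrix.mul_smul, smul_smul, hα', hV]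
  · rw [transpose_smul, transpose_transpose, Matrix.smul_mul, Matrix.mul_smul, smul_smul, hα', hVG,
      smul_sub, smul_smul, ← div_eq_mul_inv, hαα'.symm.div_conj_eq_sub_one]

end Matrix

/-- The column blocks of `A` are orthonormal bases of the ranges of the projections. -/
theorem isTFF_iff_exists_frame {N K : ℕ} {α : ℝ} {L : Fin K → ℕ} :
    IsTFF N α L ↔ ∃ A : Matrix (Fin N) (Σ i, Fin (L i)) ℝ,
      A * Aᵀ = α • 1 ∧ ∀ i, (Aᵀ * A).submatrix (Sigma.mk i) (Sigma.mk i) = 1 := by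
  constructor
  · rintro ⟨P, hPP, hPs, hPL, hPα⟩
    have hU : ∀ i, ∃ U : Matrix (Fin N) (Fin (L i)) ℝ, Uᵀ * U = 1 ∧ U * Uᵀ = P i := fun i =>
      hPL i ▸ IsSymm.exists_isometry_mul_transpose_eq_of_isIdempotentElem (hPs i) (hPP i)
    choose U hUU hUP using hU
    set A : Matrix (Fin N) (Σ i, Fin (L i)) ℝ := of fun k p => U p.1 k p.2
    have hAU : ∀ i, A.submatrix id (Sigma.mk i) = U i := fun i => rfl
    refine ⟨A, ?_, fun i => ?_⟩
    · simpa only [mul_transpose_eq_sum_submatrix_sigmaMk, hAU, hUP] using hPα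
    · rw [transpose_mul_self_submatrix_sigmaMk, hAU, hUU]
  · rintro ⟨A, hAα, hAblock⟩
    set U := fun i => A.submatrix id (Sigma.mk i)
    have hUU : ∀ i, (U i)ᵀ * U i = 1 := fun i => by
      rw [← transpose_mul_self_submatrix_sigmaMk, hAblock]
    refine ⟨fun i => U i * (U i)ᵀ, fun i => ?_, fun i => ?_, fun i => ?_, ?_⟩
    · rw [Matrix.mul_assoc, ← Matrix.mul_assoc (U i)ᵀ, hUU, Matrix.one_mul]
    · rw [transpose_mul, transpose_transpose]
    · rw [rank_self_mul_transpose, ← rank_transpose_mul_self, hUU, rank_one, Fintype.card_fin]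
    · rw [← mul_transpose_eq_sum_submatrix_sigmaMk, hAα]

theorem IsTFF.dual {N N' K : ℕ} {α α' : ℝ} {L : Fin K → ℕ} (h : IsTFF N α L)
    (hαα' : α.HolderConjugate α') (hN' : (N' : ℝ) = N * (α - 1)) : IsTFF N' α' L := by
  obtain ⟨A, hAα, hAblock⟩ := isTFF_iff_exists_frame.1 h
  have hcard : N' + Fintype.card (Fin N) = Fintype.card (Σ i, Fin (L i)) := by
    have hdiag : ∀ p, (Aᵀ * A) p p = 1 := fun p => by
      simpa using congr_fun₂ (hAblock p.1) p.2 p.2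
    have htrace : (Aᵀ * A).trace = α * N := by
      rw [trace_mul_comm, hAα, trace_smul, trace_one, Fintype.card_fin, smul_eq_mul]
    simp only [trace, diag_apply, hdiag, Finset.sum_const, Finset.card_univ, nsmul_one] at htrace
    rw [Fintype.card_fin, ← Nat.cast_inj (R := ℝ), htrace]
    push_cast
    linear_combination hN'
  obtain ⟨B, hBα', hBblock⟩ := exists_naimark_complement hαα' hAα hcard
  refine isTFF_iff_exists_frame.2 ⟨B, hBα', fun i => ?_⟩
  simp only [hBblock, submatrix_sub, submatrix_smul, Pi.sub_apply, Pi.smul_apply, hAblock,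
    submatrix_one _ sigma_mk_injective]
  module

theorem TFF_duality_set_eq_general (N N' : ℕ) (α α' : ℝ) (hα : 1 < α)
    (hdual : 1 / α + 1 / α' = 1)
    (hN' : (N' : ℝ) = N * (α - 1)) :
    ∀ (K : ℕ) (L : Fin K → ℕ), Antitone L → (∀ i, 0 < L i) →
      (IsTFF N α L ↔ IsTFF N' α' L) := by
  intro K L _ _
  have hαα' : α.HolderConjugate α' := Real.holderConjugate_iff.2 ⟨hα, by simpa using hdual⟩
  have hN : (N : ℝ) = N' * (α' - 1) := by
    rw [hN']
    linear_combination -(N : ℝ) * hαα'.mul_eq_add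
  exact ⟨fun h => h.dual hαα' hN', fun h => h.dual hαα'.symm hN⟩

/-- If `α > 1` and `αN ∈ ℕ`, then `TFF(α, N) = TFF(α̃, Ñ)` as sets of weakly decreasing
positive sequences, where `1/α + 1/α̃ = 1` and `Ñ = N(α - 1)`. -/
theorem TFF_duality_set_eq (N N' : ℕ) (α α' : ℝ) (hα : 1 < α)
    (hαN : ∃ m : ℕ, (m : ℝ) = α * N)
    (hdual : 1 / α + 1 / α' = 1)
    (hN' : (N' : ℝ) = N * (α - 1)) :
    ∀ (K : ℕ) (L : Fin K → ℕ), Antitone L → (∀ i, 0 < L i) →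
      (IsTFF N α L ↔ IsTFF N' α' L) :=
  TFF_duality_set_eq_general N N' α α' hα hdual hN'
end
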